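/- arXiv:2006.10961 — 8 statements merged into one kernel-verified Lean document; each statement's English description precedes it below -/
import Mathlib

section
/- Every complex eigenvalue of the generalized Laplacian L has nonnegative real part: if μ ∈ spectrum ℂ of the complex matrix obtained by mapping the entries of L into ℂ, then 0 ≤ Re(μ). -/
/-- Every complex eigenvalue of the generalized Laplacian `L = D - A`,
where `D` is the diagonal matrix of absolute row sums of `A`,
has nonnegative real part. -/
theorem gen_laplacian_spectrum_re_nonneg
    (n : ℕ) (A : Matrix (Fin n) (Fin n) ℝ)
    (L : Matrix (Fin n) (Fin n) ℝ)
    (hL : L = Matrix.diagonal (fun i => ∑ j, |A i j|) - A)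
    (μ : ℂ) (hμ : μ ∈ spectrum ℂ (L.map (Complex.ofReal : ℝ → ℂ))) :
    0 ≤ μ.re := by
  set M := L.map (Complex.ofReal : ℝ → ℂ)
  have hev : Module.End.HasEigenvalue (Matrix.toLin' M) μ := by
    rw [Module.End.hasEigenvalue_iff_mem_spectrum]
    have h := AlgEquiv.spectrum_eq (Matrix.toLinAlgEquiv' : Matrix (Fin n) (Fin n) ℂ ≃ₐ[ℂ] _) M
    rw [show (Matrix.toLin' M) = Matrix.toLinAlgEquiv' M from rfl, h]
    exact hμ
  obtain ⟨k, hk⟩ := eigenvalue_mem_ball hev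
  rw [Metric.mem_closedBall, dist_eq_norm] at hk
  have hdiag : M k k = ((∑ j, |A k j|) - A k k : ℝ) := by
    simp [M, hL, Matrix.map_apply, Matrix.diagonal_apply_eq]
  have hoff : ∀ j, j ≠ k → ‖M k j‖ = |A k j| := by
    intro j hj
    simp [M, hL, Matrix.map_apply, Matrix.diagonal_apply_ne' _ hj, Complex.norm_real]
  have hsum : ∑ j ∈ Finset.univ.erase k, ‖M k j‖ = ∑ j ∈ Finset.univ.erase k, |A k j| := by
    refine Finset.sum_congr rfl fun j hj => hoff j (Finset.ne_of_mem_erase hj)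
  have hre : |μ.re - ((∑ j, |A k j|) - A k k)| ≤ ∑ j ∈ Finset.univ.erase k, |A k j| := by
    calc |μ.re - ((∑ j, |A k j|) - A k k)| = |(μ - M k k).re| := by rw [hdiag]; simp
      _ ≤ ‖μ - M k k‖ := Complex.abs_re_le_norm _
      _ ≤ _ := by rw [← hsum]; exact hk
  have hsplit : (∑ j, |A k j|) = |A k k| + ∑ j ∈ Finset.univ.erase k, |A k j| :=
    (Finset.add_sum_erase _ _ (Finset.mem_univ k)).symm
  have h1 : -(∑ j ∈ Finset.univ.erase k, |A k j|) ≤ μ.re - ((∑ j, |A k j|) - A k k) :=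
    neg_le_of_abs_le hre
  have h2 : A k k ≤ |A k k| := le_abs_self _
  nlinarith [h1, h2, hsplit]
end

section
/- Theorem 1: The matrix L + I (the generalized Laplacian plus the identity matrix) is invertible, i.e., IsUnit (L + 1) as an element of the matrix ring, equivalently det (L + 1) ≠ 0. -/
/-- Theorem 1: the matrix `L + I` is invertible, where `L = D - A` is the
generalized Laplacian of a social trust network. -/
theorem gen_laplacian_add_one_isUnit
    (n : ℕ) (A : Matrix (Fin n) (Fin n) ℝ)
    (L : Matrix (Fin n) (Fin n) ℝ)
    (hL : L = Matrix.diagonal (fun i => ∑ j, |A i j|) - A) :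
    IsUnit (L + 1) := by
  rw [Matrix.isUnit_iff_isUnit_det, isUnit_iff_ne_zero]
  apply det_ne_zero_of_sum_row_lt_diag
  intro k
  have hoff : ∀ j ∈ Finset.univ.erase k, ‖(L + 1) k j‖ = |A k j| := by
    intro j hj
    have hjk : j ≠ k := Finset.ne_of_mem_erase hj
    simp [hL, Matrix.sub_apply, Matrix.add_apply, Matrix.one_apply_ne hjk.symm,
      Matrix.diagonal_apply_ne _ hjk.symm, Real.norm_eq_abs, abs_neg]
  rw [Finset.sum_congr rfl hoff]
  have hdiag : (L + 1) k k = (∑ j, |A k j|) + 1 - A k k := by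
    simp [hL, Matrix.sub_apply, Matrix.add_apply, Matrix.one_apply_eq,
      Matrix.diagonal_apply_eq]
    ring
  have hsplit : (∑ j, |A k j|) = |A k k| + ∑ j ∈ Finset.univ.erase k, |A k j| :=
    (Finset.add_sum_erase _ _ (Finset.mem_univ k)).symm
  have hpos : (L + 1) k k > ∑ j ∈ Finset.univ.erase k, |A k j| := by
    rw [hdiag, hsplit]
    have := abs_nonneg (A k k)
    have := le_abs_self (A k k)
    linarith
  have hS : (0:ℝ) ≤ ∑ j ∈ Finset.univ.erase k, |A k j| :=
    Finset.sum_nonneg fun _ _ => abs_nonneg _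
  rw [Real.norm_eq_abs, abs_of_pos (lt_of_le_of_lt hS hpos)]
  exact hpos
end

section
/- Theorem 4: For every index i : Fin n, the matrix X = (L + 1) - eᵢ · lᵢ is invertible, where eᵢ · lᵢ denotes the rank-one matrix whose row i equals the i-th row of L and whose other rows are zero. Equivalently, the matrix obtained from L + I by replacing its i-th row with the standard basis row vector eᵢᵀ is invertible. -/
open Matrix

/-- Theorem 4: `X = (L + I) - eᵢ lᵢ` is invertible, where `eᵢ lᵢ` is the rank-one
matrix whose row `i` is the `i`-th row of `L` and whose other rows vanish.
Equivalently, the matrix obtained from `L + I` by replacing row `i` with the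
standard basis row `eᵢᵀ` is invertible. -/
theorem row_fixed_matrix_isUnit
    (n : ℕ) (A : Matrix (Fin n) (Fin n) ℝ)
    (L : Matrix (Fin n) (Fin n) ℝ)
    (hL : L = Matrix.diagonal (fun i => ∑ j, |A i j|) - A)
    (i : Fin n)
    (X : Matrix (Fin n) (Fin n) ℝ)
    (hX : X = (L + 1) - Matrix.of (fun j k => if j = i then L i k else 0)) :
    IsUnit X := by
  rw [Matrix.isUnit_iff_isUnit_det, isUnit_iff_ne_zero]
  apply det_ne_zero_of_sum_row_lt_diag
  intro k
  by_cases hk : k = i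
  · subst hk
    have hrow : ∀ m, X k m = if k = m then (1 : ℝ) else 0 := by
      intro m
      simp [hX, Matrix.one_apply]
    rw [hrow k, if_pos rfl]
    have : ∑ j ∈ Finset.univ.erase k, ‖X k j‖ = 0 := by
      apply Finset.sum_eq_zero
      intro j hj
      rw [hrow j, if_neg (Finset.ne_of_mem_erase hj).symm]
      simp
    rw [this]; norm_num
  · have hrow : ∀ m, X k m = L k m + (if k = m then (1 : ℝ) else 0) := by
      intro m
      simp [hX, Matrix.one_apply, hk]
    have hdiag : X k k = (∑ j, |A k j|) - A k k + 1 := by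
      rw [hrow k, if_pos rfl, hL]
      simp [Matrix.diagonal]
    have hoff : ∀ m, m ≠ k → ‖X k m‖ = |A k m| := by
      intro m hm
      rw [hrow m, if_neg (fun h => hm h.symm), hL, add_zero]
      simp [Matrix.diagonal_apply_ne' _ hm, abs_neg]
    calc ∑ j ∈ Finset.univ.erase k, ‖X k j‖
        = ∑ j ∈ Finset.univ.erase k, |A k j| := by
          apply Finset.sum_congr rfl
          intro j hj
          exact hoff j (Finset.ne_of_mem_erase hj)
      _ = (∑ j, |A k j|) - |A k k| := by
          rw [Finset.sum_erase_eq_sub (Finset.mem_univ k)]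
      _ < (∑ j, |A k j|) - A k k + 1 := by
          have := le_abs_self (A k k)
          linarith
      _ = ‖X k k‖ := by
          rw [hdiag, Real.norm_eq_abs, abs_of_pos]
          have h1 : |A k k| ≤ ∑ j, |A k j| :=
            Finset.single_le_sum (f := fun j => |A k j|) (fun j _ => abs_nonneg _) (Finset.mem_univ k)
          have := le_abs_self (A k k)
          linarith
end

section
/- Row-fixing preserves invertibility for any set of nodes: for every finite set U ⊆ Fin n, the matrix M_U defined by (M_U) i j = (if i = j then 1 else 0) when i ∈ U, and (M_U) i j = (L + 1) i j when i ∉ U, is invertible. -/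
open Matrix

/-- Row-fixing preserves invertibility: for every finite set `U` of nodes,
the matrix obtained from `L + I` by replacing each row `i ∈ U` with the
standard basis row `eᵢᵀ` is invertible. -/
theorem row_fixed_matrix_isUnit_of_set
    (n : ℕ) (A : Matrix (Fin n) (Fin n) ℝ)
    (L : Matrix (Fin n) (Fin n) ℝ)
    (hL : L = Matrix.diagonal (fun i => ∑ j, |A i j|) - A)
    (U : Finset (Fin n))
    (M : Matrix (Fin n) (Fin n) ℝ)
    (hM : ∀ i j, M i j = if i ∈ U then (if i = j then 1 else 0) else (L + 1) i j) :
    IsUnit M := by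
  rw [Matrix.isUnit_iff_isUnit_det, isUnit_iff_ne_zero]
  apply det_ne_zero_of_sum_row_lt_diag
  intro k
  by_cases hk : k ∈ U
  · have h1 : ∑ j ∈ Finset.univ.erase k, ‖M k j‖ = 0 := by
      apply Finset.sum_eq_zero
      intro j hj
      rw [hM k j, if_pos hk, if_neg (Finset.ne_of_mem_erase hj).symm]
      simp
    rw [h1, hM k k, if_pos hk, if_pos rfl]
    norm_num
  · have hdiag : M k k = ∑ j, |A k j| - A k k + 1 := by
      rw [hM k k, if_neg hk, hL]
      simp [Matrix.one_apply, Matrix.diagonal_apply]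
      try ring
    have hoff : ∀ j ∈ Finset.univ.erase k, ‖M k j‖ = |A k j| := by
      intro j hj
      have hjk : j ≠ k := Finset.ne_of_mem_erase hj
      rw [hM k j, if_neg hk, hL]
      simp [Matrix.one_apply, Matrix.diagonal_apply, hjk.symm, Ne.symm hjk, abs_neg]
    rw [Finset.sum_congr rfl hoff]
    have hS : ∑ j ∈ Finset.univ.erase k, |A k j| = (∑ j, |A k j|) - |A k k| := by
      rw [Finset.sum_erase_eq_sub (Finset.mem_univ k)]
    have hpos : (0:ℝ) < ∑ j, |A k j| - A k k + 1 := by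
      have := abs_nonneg (A k k)
      have h2 : A k k ≤ ∑ j, |A k j| := le_trans (le_abs_self _) (Finset.single_le_sum (f := fun j => |A k j|) (fun j _ => abs_nonneg _) (Finset.mem_univ k))
      linarith
    rw [hdiag]
    rw [Real.norm_eq_abs, abs_of_pos hpos, hS]
    have : |A k k| ≥ A k k := le_abs_self _
    linarith
end

section
/- Nonvanishing diagonal of the fundamental matrix: let U ⊆ Fin n be a finite set, M_U be L + I with each row in U replaced by the corresponding standard basis row, and Q = M_U⁻¹. Then for every i ∉ U, the diagonal entry Q i i is nonzero. -/
open Matrix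

lemma sdd_row_aux (n : ℕ) (A : Matrix (Fin n) (Fin n) ℝ)
    (M : Matrix (Fin n) (Fin n) ℝ) (k : Fin n)
    (hrow : ∀ j, M k j = (Matrix.diagonal (fun i => ∑ j, |A i j|) - A + 1) k j) :
    ∑ j ∈ Finset.univ.erase k, ‖M k j‖ < ‖M k k‖ := by
  have hoff : ∀ j, j ≠ k → M k j = -A k j := by
    intro j hj
    rw [hrow j]
    simp [Matrix.diagonal_apply_ne' _ hj, Matrix.one_apply_ne' hj, Matrix.sub_apply]
  have hdiag : M k k = (∑ j, |A k j|) - A k k + 1 := by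
    rw [hrow k]; simp [Matrix.sub_apply]
  have hsplit : (∑ j, |A k j|) = |A k k| + ∑ j ∈ Finset.univ.erase k, |A k j| := by
    rw [← Finset.add_sum_erase _ _ (Finset.mem_univ k)]
  have hge : M k k ≥ (∑ j ∈ Finset.univ.erase k, |A k j|) + 1 := by
    rw [hdiag, hsplit]
    have := le_abs_self (A k k)
    linarith
  have hpos : (0:ℝ) < M k k := lt_of_lt_of_le (by positivity) hge
  have : ∑ j ∈ Finset.univ.erase k, ‖M k j‖ = ∑ j ∈ Finset.univ.erase k, |A k j| := by
    refine Finset.sum_congr rfl fun j hj => ?_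
    rw [hoff j (Finset.ne_of_mem_erase hj)]
    simp [Real.norm_eq_abs, abs_neg]
  rw [this, Real.norm_eq_abs, abs_of_pos hpos]
  linarith

/-- Nonvanishing diagonal of the fundamental matrix `Q = M_U⁻¹`:
for every node `i ∉ U`, the diagonal entry `Q i i` is nonzero. -/
theorem fundamental_matrix_diag_ne_zero
    (n : ℕ) (A : Matrix (Fin n) (Fin n) ℝ)
    (L : Matrix (Fin n) (Fin n) ℝ)
    (hL : L = Matrix.diagonal (fun i => ∑ j, |A i j|) - A)
    (U : Finset (Fin n))
    (M : Matrix (Fin n) (Fin n) ℝ)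
    (hM : ∀ i j, M i j = if i ∈ U then (if i = j then 1 else 0) else (L + 1) i j)
    (Q : Matrix (Fin n) (Fin n) ℝ)
    (hQ : Q = M⁻¹)
    (i : Fin n) (hi : i ∉ U) :
    Q i i ≠ 0 := by
  subst hL hQ
  -- rows of type `e_k` satisfy strict dominance trivially
  have hbasis : ∀ (N : Matrix (Fin n) (Fin n) ℝ) (k : Fin n),
      (∀ j, N k j = if k = j then 1 else 0) →
      ∑ j ∈ Finset.univ.erase k, ‖N k j‖ < ‖N k k‖ := by
    intro N k h
    have h1 : ∑ j ∈ Finset.univ.erase k, ‖N k j‖ = 0 := by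
      refine Finset.sum_eq_zero fun j hj => ?_
      rw [h j, if_neg (Finset.ne_of_mem_erase hj).symm]
      simp
    rw [h1, h k, if_pos rfl]
    simp
  have hMdom : ∀ k, ∑ j ∈ Finset.univ.erase k, ‖M k j‖ < ‖M k k‖ := by
    intro k
    by_cases hk : k ∈ U
    · exact hbasis M k (fun j => by rw [hM k j, if_pos hk])
    · exact sdd_row_aux n A M k (fun j => by rw [hM k j, if_neg hk])
  have hdet : M.det ≠ 0 := det_ne_zero_of_sum_row_lt_diag hMdom
  set M' := M.updateRow i (Pi.single i 1) with hM'
  have hM'dom : ∀ k, ∑ j ∈ Finset.univ.erase k, ‖M' k j‖ < ‖M' k k‖ := by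
    intro k
    by_cases hk : k = i
    · subst hk
      refine hbasis M' k fun j => ?_
      rw [hM', Matrix.updateRow_self, Pi.single_apply]
      simp [eq_comm]
    · have hrow : ∀ j, M' k j = M k j := fun j => by
        rw [hM', Matrix.updateRow_ne hk]
      simp only [hrow]
      exact hMdom k
  have hdet' : M'.det ≠ 0 := det_ne_zero_of_sum_row_lt_diag hM'dom
  rw [Matrix.inv_def, Matrix.smul_apply, smul_eq_mul]
  rw [Ring.inverse_eq_inv']
  refine mul_ne_zero (inv_ne_zero hdet) ?_
  rw [Matrix.adjugate_apply]
  exact hdet'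
end

section
/- Sherman–Morrison update for fixing one more node (the paper's equation (5)): let U ⊆ Fin n be a finite set, i ∉ U, M_U and M_{U∪{i}} the row-fixed matrices, Q = M_U⁻¹ and Q' = M_{U∪{i}}⁻¹. Then for all j, k : Fin n, Q' j k = Q j k + Q j i · ((if i = k then 1 else 0) - Q i k) / (Q i i). -/
/-!
`M_{U ∪ {i}}` is `M_U` with row `i` replaced by the basis row `eᵢ`, a rank-one update, so the
Sherman–Morrison formula applies. Its denominator is `Q i i`, which by Cramer's rule equals
`det M_{U ∪ {i}} / det M_U`; it is nonzero because every row-fixed matrix of `L + 1` is strictly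
diagonally dominant.
-/

open Matrix Finset

namespace Matrix

variable {K ι : Type*} [DecidableEq ι]

/-- The paper's `M_U` is `(L + 1).fixRows U`. -/
def fixRows [Zero K] [One K] (N : Matrix ι ι K) (U : Finset ι) : Matrix ι ι K :=
  of fun j k => if j ∈ U then (1 : Matrix ι ι K) j k else N j k

theorem fixRows_insert [Zero K] [One K] (N : Matrix ι ι K) (U : Finset ι) (i : ι) :
    N.fixRows (insert i U) = (N.fixRows U).updateRow i (Pi.single i 1) := by
  ext j k
  rcases eq_or_ne j i with rfl | hj
  · simp [fixRows, one_apply, Pi.single_apply, eq_comm]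
  · simp [fixRows, hj]

variable [Fintype ι]

theorem det_fixRows_ne_zero [NormedField K] {N : Matrix ι ι K}
    (hN : ∀ k, ∑ j ∈ univ.erase k, ‖N k j‖ < ‖N k k‖) (U : Finset ι) :
    (N.fixRows U).det ≠ 0 := by
  refine det_ne_zero_of_sum_row_lt_diag fun k => ?_
  by_cases hk : k ∈ U
  · have hoff : ∑ j ∈ univ.erase k, ‖N.fixRows U k j‖ = 0 :=
      sum_eq_zero fun j hj => by simp [fixRows, hk, one_apply_ne (ne_of_mem_erase hj).symm]
    rw [hoff]
    simp [fixRows, hk]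
  · simpa [fixRows, hk] using hN k

variable [Field K]

theorem inv_apply_self (M : Matrix ι ι K) (i : ι) :
    M⁻¹ i i = (M.updateRow i (Pi.single i 1)).det / M.det := by
  rw [inv_def, smul_apply, adjugate_apply, Ring.inverse_eq_inv', smul_eq_mul, div_eq_inv_mul]

/-- Sherman–Morrison: the update is `M + eᵢ (eᵢ - Mᵢ)ᵀ`, whose denominator
`1 + (eᵢ - Mᵢ)ᵀ M⁻¹ eᵢ` is `M⁻¹ i i`. -/
theorem inv_updateRow_single_apply (M : Matrix ι ι K) (hM : IsUnit M.det) (i : ι)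
    (hii : M⁻¹ i i ≠ 0) (j k : ι) :
    (M.updateRow i (Pi.single i 1))⁻¹ j k =
      M⁻¹ j k + M⁻¹ j i * ((1 : Matrix ι ι K) i k - M⁻¹ i k) / M⁻¹ i i := by
  set Q := M⁻¹
  have hMQ : M * Q = 1 := mul_nonsing_inv M hM
  suffices M.updateRow i (Pi.single i 1) *
      of (fun j k => Q j k + Q j i * ((1 : Matrix ι ι K) i k - Q i k) / Q i i) = 1 by
    rw [inv_eq_right_inv this, of_apply]
  ext l k
  rcases eq_or_ne l i with rfl | hl
  · simp only [mul_apply, updateRow_self, Pi.single_apply, ite_mul, one_mul, zero_mul,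
      sum_ite_eq', mem_univ, if_true, of_apply]
    field_simp
    ring
  · have hcol : ∀ c, ∑ x, M l x * (Q x i * c / Q i i) = (M * Q) l i * (c / Q i i) := fun c => by
      simp only [mul_apply, sum_mul]
      exact sum_congr rfl fun x _ => by ring
    simp only [mul_apply, updateRow_ne hl, of_apply, mul_add, sum_add_distrib]
    rw [hcol, ← mul_apply, hMQ, one_apply_ne hl, zero_mul, add_zero]

end Matrix

theorem sum_row_lt_diag_laplacian_add_one {ι : Type*} [Fintype ι] [DecidableEq ι]
    (A : Matrix ι ι ℝ) (k : ι) :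
    ∑ j ∈ univ.erase k, ‖(diagonal (fun i => ∑ j, |A i j|) - A + 1) k j‖ <
      ‖(diagonal (fun i => ∑ j, |A i j|) - A + 1) k k‖ := by
  set N := diagonal (fun i => ∑ j, |A i j|) - A + 1
  have hoff : ∑ j ∈ univ.erase k, ‖N k j‖ = ∑ j ∈ univ.erase k, |A k j| :=
    sum_congr rfl fun j hj => by
      simp [N, diagonal_apply_ne _ (ne_of_mem_erase hj).symm,
        one_apply_ne (ne_of_mem_erase hj).symm]
  have hdiag : N k k = ∑ j ∈ univ.erase k, |A k j| + (|A k k| - A k k) + 1 := by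
    simp only [N, Matrix.add_apply, Matrix.sub_apply, diagonal_apply_eq, one_apply_eq,
      ← add_sum_erase univ _ (mem_univ k)]
    ring
  have hrest : 0 ≤ ∑ j ∈ univ.erase k, |A k j| := sum_nonneg fun j _ => abs_nonneg _
  have hkk : 0 ≤ |A k k| - A k k := sub_nonneg.2 (le_abs_self _)
  rw [hoff, hdiag, Real.norm_eq_abs, abs_of_pos (by positivity)]
  linarith

theorem sherman_morrison_fix_one_more_general
    (n : ℕ) (A : Matrix (Fin n) (Fin n) ℝ)
    (L : Matrix (Fin n) (Fin n) ℝ)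
    (hL : L = Matrix.diagonal (fun i => ∑ j, |A i j|) - A)
    (U : Finset (Fin n)) (i : Fin n)
    (M M' : Matrix (Fin n) (Fin n) ℝ)
    (hM : ∀ j k, M j k = if j ∈ U then (if j = k then 1 else 0) else (L + 1) j k)
    (hM' : ∀ j k, M' j k =
      if j ∈ insert i U then (if j = k then 1 else 0) else (L + 1) j k)
    (Q Q' : Matrix (Fin n) (Fin n) ℝ)
    (hQ : Q = M⁻¹) (hQ' : Q' = M'⁻¹) :
    ∀ j k, Q' j k = Q j k + Q j i * ((if i = k then 1 else 0) - Q i k) / Q i i := by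
  obtain rfl : M = (L + 1).fixRows U := by ext j k; simp [hM, fixRows, one_apply]
  obtain rfl : M' = (L + 1).fixRows (insert i U) := by
    ext j k; simp [hM', fixRows, one_apply]
  subst hQ hQ'
  have hdom := hL ▸ sum_row_lt_diag_laplacian_add_one A
  have hdet := det_fixRows_ne_zero hdom U
  have hii : ((L + 1).fixRows U)⁻¹ i i ≠ 0 := by
    rw [inv_apply_self, ← fixRows_insert]
    exact div_ne_zero (det_fixRows_ne_zero hdom _) hdet
  intro j k
  rw [fixRows_insert, inv_updateRow_single_apply _ hdet.isUnit i hii, one_apply]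

/-- Sherman–Morrison update for fixing one more node (the paper's equation (5)):
if `Q = M_U⁻¹` and `Q' = M_{U ∪ {i}}⁻¹` with `i ∉ U`, then
`Q' j k = Q j k + Q j i * ([i = k] - Q i k) / Q i i`. -/
theorem sherman_morrison_fix_one_more
    (n : ℕ) (A : Matrix (Fin n) (Fin n) ℝ)
    (L : Matrix (Fin n) (Fin n) ℝ)
    (hL : L = Matrix.diagonal (fun i => ∑ j, |A i j|) - A)
    (U : Finset (Fin n)) (i : Fin n) (hi : i ∉ U)
    (M M' : Matrix (Fin n) (Fin n) ℝ)
    (hM : ∀ j k, M j k = if j ∈ U then (if j = k then 1 else 0) else (L + 1) j k)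
    (hM' : ∀ j k, M' j k =
      if j ∈ insert i U then (if j = k then 1 else 0) else (L + 1) j k)
    (Q Q' : Matrix (Fin n) (Fin n) ℝ)
    (hQ : Q = M⁻¹) (hQ' : Q' = M'⁻¹) :
    ∀ j k, Q' j k = Q j k + Q j i * ((if i = k then 1 else 0) - Q i k) / Q i i :=
  sherman_morrison_fix_one_more_general n A L hL U i M M' hM hM' Q Q' hQ hQ'
end

section
/- Benefit formula for fixing an expressed opinion (the paper's equation (8)): let U ⊆ Fin n be a finite set, i ∉ U, Q = M_U⁻¹, Q' = M_{U∪{i}}⁻¹, and s : Fin n → ℝ. Define g i = ∑_j Q j i (the contribution index of node i after fixing U) and z i = ∑_k Q i k · s k (the equilibrium expressed opinion of node i after fixing U). Then ∑_j ∑_k (Q' j k - Q j k) · s k = (g i / Q i i) · (s i - z i). -/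
/-!
Fixing node `i` replaces row `i` of `M` by `eᵢᵀ`, and `eᵢᵀ = Qᵢ M` where `Qᵢ` is row `i` of
`Q = M⁻¹`. Hence `M' = E M`, where `E` is the identity with row `i` replaced by `Qᵢ`. The inverse
of `E` is a rank-one correction of the identity, so
`Q' = Q - (Q i i)⁻¹ • (Q eᵢ)(Qᵢ - eᵢ)ᵀ`, and applying `1ᵀ(·)s` gives the formula.
By Cramer's rule, `det M' = Q i i * det M`. Both determinants are nonzero because every `M_U` is
strictly row diagonally dominant, so `Q i i ≠ 0`.
-/

open Matrix

variable {ι K : Type*} [Fintype ι] [DecidableEq ι] [Field K]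

lemma inv_one_updateRow {i : ι} {r : ι → K} (hr : r i ≠ 0) :
    ((1 : Matrix ι ι K).updateRow i r)⁻¹ =
      1 - (r i)⁻¹ • vecMulVec (Pi.single i 1) (r - Pi.single i 1) := by
  refine inv_eq_right_inv ?_
  rw [Matrix.mul_sub, Matrix.mul_one, Matrix.mul_smul, mul_vecMulVec, mulVec_single_one]
  ext j k
  rcases eq_or_ne j i with rfl | hj
  · rcases eq_or_ne j k with rfl | hk
    · simp only [Matrix.sub_apply, updateRow_self, Matrix.smul_apply, vecMulVec_apply, col_apply,
        Pi.sub_apply, Pi.single_eq_same, smul_eq_mul, one_apply_eq]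
      field_simp
      ring
    · simp only [Matrix.sub_apply, updateRow_self, Matrix.smul_apply, vecMulVec_apply, col_apply,
        Pi.sub_apply, Pi.single_eq_of_ne' hk, sub_zero, smul_eq_mul, one_apply_ne hk]
      field_simp
      ring
  · simp [hj, vecMulVec_apply, updateRow_apply]

lemma updateRow_single_self_eq_mul {M : Matrix ι ι K} (hM : M.det ≠ 0) (i : ι) :
    M.updateRow i (Pi.single i 1) = (1 : Matrix ι ι K).updateRow i (M⁻¹.row i) * M := by
  rw [updateRow_mul, Matrix.one_mul, ← single_one_vecMul, vecMul_vecMul,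
    nonsing_inv_mul _ hM.isUnit, vecMul_one]

lemma inv_updateRow_single_self {M : Matrix ι ι K} (hM : M.det ≠ 0) {i : ι}
    (hii : M⁻¹ i i ≠ 0) :
    (M.updateRow i (Pi.single i 1))⁻¹ =
      M⁻¹ - (M⁻¹ i i)⁻¹ • vecMulVec (M⁻¹.col i) (M⁻¹.row i - Pi.single i 1) := by
  rw [updateRow_single_self_eq_mul hM, Matrix.mul_inv_rev, inv_one_updateRow (r := M⁻¹.row i) hii,
    Matrix.mul_sub, Matrix.mul_one, Matrix.mul_smul, mul_vecMulVec, mulVec_single_one, row_apply]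

lemma det_updateRow_single_self {M : Matrix ι ι K} (hM : M.det ≠ 0) (i : ι) :
    (M.updateRow i (Pi.single i 1)).det = M⁻¹ i i * M.det := by
  rw [Matrix.inv_def, Matrix.smul_apply, adjugate_apply, smul_eq_mul, Ring.inverse_eq_inv',
    mul_comm, ← mul_assoc, mul_inv_cancel₀ hM, one_mul]

lemma sum_sum_inv_updateRow_sub_inv_mul {M : Matrix ι ι K} (hM : M.det ≠ 0) {i : ι}
    (hii : M⁻¹ i i ≠ 0) (s : ι → K) :
    ∑ j, ∑ k, ((M.updateRow i (Pi.single i 1))⁻¹ j k - M⁻¹ j k) * s k =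
      ((∑ j, M⁻¹ j i) / M⁻¹ i i) * (s i - ∑ k, M⁻¹ i k * s k) := by
  have hrow : ∑ k, (M⁻¹ i k - (Pi.single i 1 : ι → K) k) * s k = ∑ k, M⁻¹ i k * s k - s i := by
    simp [sub_mul, Finset.sum_sub_distrib, Pi.single_apply]
  calc ∑ j, ∑ k, ((M.updateRow i (Pi.single i 1))⁻¹ j k - M⁻¹ j k) * s k
      = ∑ j, -(M⁻¹ i i)⁻¹ * M⁻¹ j i * ∑ k, (M⁻¹ i k - (Pi.single i 1 : ι → K) k) * s k := by
        refine Finset.sum_congr rfl fun j _ => ?_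
        rw [Finset.mul_sum]
        refine Finset.sum_congr rfl fun k _ => ?_
        simp only [inv_updateRow_single_self hM hii, Matrix.sub_apply, Matrix.smul_apply,
          vecMulVec_apply, col_apply, row_apply, Pi.sub_apply, smul_eq_mul]
        ring
    _ = _ := by
        rw [hrow, ← Finset.sum_mul, ← Finset.mul_sum]
        field_simp
        ring

lemma sum_erase_norm_lt_laplacian_add_one (A : Matrix ι ι ℝ) (k : ι) :
    ∑ j ∈ Finset.univ.erase k, ‖(diagonal (fun i => ∑ j, |A i j|) - A + 1) k j‖ <
      ‖(diagonal (fun i => ∑ j, |A i j|) - A + 1) k k‖ := by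
  have hoff : ∀ j ∈ Finset.univ.erase k,
      ‖(diagonal (fun i => ∑ j, |A i j|) - A + 1) k j‖ = |A k j| := fun j hj => by
    have hkj : k ≠ j := (Finset.ne_of_mem_erase hj).symm
    simp [diagonal_apply_ne _ hkj, one_apply_ne hkj]
  have hdiag : (diagonal (fun i => ∑ j, |A i j|) - A + 1) k k = ∑ j, |A k j| - A k k + 1 := by
    simp
  rw [Finset.sum_congr rfl hoff, Finset.sum_erase_eq_sub (Finset.mem_univ k), hdiag]
  have hAkk : A k k ≤ |A k k| := le_abs_self _
  have hrest : |A k k| ≤ ∑ j, |A k j| :=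
    Finset.single_le_sum (fun j _ => abs_nonneg (A k j)) (Finset.mem_univ k)
  rw [Real.norm_of_nonneg (by linarith)]
  linarith

lemma det_ne_zero_of_rows_one_or_laplacian_add_one (A B : Matrix ι ι ℝ) (P : ι → Prop)
    [DecidablePred P]
    (hB : ∀ j k, B j k =
      if P j then (if j = k then 1 else 0) else (diagonal (fun i => ∑ j, |A i j|) - A + 1) j k) :
    B.det ≠ 0 := by
  refine det_ne_zero_of_sum_row_lt_diag fun k => ?_
  by_cases hk : P k
  · have hoff : ∀ j ∈ Finset.univ.erase k, ‖B k j‖ = 0 := fun j hj => by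
      simp [hB, hk, (Finset.ne_of_mem_erase hj).symm]
    rw [Finset.sum_congr rfl hoff]
    simp [hB, hk]
  · simp only [hB, hk, if_false]
    exact sum_erase_norm_lt_laplacian_add_one A k

theorem benefit_of_fixing_expressed_opinion_general
    (n : ℕ) (A : Matrix (Fin n) (Fin n) ℝ)
    (L : Matrix (Fin n) (Fin n) ℝ)
    (hL : L = Matrix.diagonal (fun i => ∑ j, |A i j|) - A)
    (U : Finset (Fin n)) (i : Fin n)
    (M M' : Matrix (Fin n) (Fin n) ℝ)
    (hM : ∀ j k, M j k = if j ∈ U then (if j = k then 1 else 0) else (L + 1) j k)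
    (hM' : ∀ j k, M' j k =
      if j ∈ insert i U then (if j = k then 1 else 0) else (L + 1) j k)
    (Q Q' : Matrix (Fin n) (Fin n) ℝ)
    (hQ : Q = M⁻¹) (hQ' : Q' = M'⁻¹)
    (s : Fin n → ℝ) :
    ∑ j, ∑ k, (Q' j k - Q j k) * s k =
      ((∑ j, Q j i) / Q i i) * (s i - ∑ k, Q i k * s k) := by
  subst hL hQ hQ'
  have hdet : M.det ≠ 0 := det_ne_zero_of_rows_one_or_laplacian_add_one A M (· ∈ U) hM
  have hdet' : M'.det ≠ 0 :=
    det_ne_zero_of_rows_one_or_laplacian_add_one A M' (· ∈ insert i U) hM'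
  have hM'_eq : M' = M.updateRow i (Pi.single i 1) := by
    ext j k
    rcases eq_or_ne j i with rfl | hj
    · simp [hM', Pi.single_apply, eq_comm]
    · simp [hM', hM, hj]
  subst hM'_eq
  have hii : M⁻¹ i i ≠ 0 := left_ne_zero_of_mul (det_updateRow_single_self hdet i ▸ hdet')
  exact sum_sum_inv_updateRow_sub_inv_mul hdet hii s

/-- Benefit formula for fixing an expressed opinion (the paper's equation (8)):
with `Q = M_U⁻¹`, `Q' = M_{U ∪ {i}}⁻¹`, contribution index `g i = ∑_j Q j i`
and equilibrium expressed opinion `z i = ∑_k Q i k * s k`, the increase of the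
overall opinion obtained by additionally fixing node `i ∉ U` is
`1ᵀ(Q' - Q)s = (g i / Q i i) * (s i - z i)`. -/
theorem benefit_of_fixing_expressed_opinion
    (n : ℕ) (A : Matrix (Fin n) (Fin n) ℝ)
    (L : Matrix (Fin n) (Fin n) ℝ)
    (hL : L = Matrix.diagonal (fun i => ∑ j, |A i j|) - A)
    (U : Finset (Fin n)) (i : Fin n) (hi : i ∉ U)
    (M M' : Matrix (Fin n) (Fin n) ℝ)
    (hM : ∀ j k, M j k = if j ∈ U then (if j = k then 1 else 0) else (L + 1) j k)
    (hM' : ∀ j k, M' j k =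
      if j ∈ insert i U then (if j = k then 1 else 0) else (L + 1) j k)
    (Q Q' : Matrix (Fin n) (Fin n) ℝ)
    (hQ : Q = M⁻¹) (hQ' : Q' = M'⁻¹)
    (s : Fin n → ℝ) :
    ∑ j, ∑ k, (Q' j k - Q j k) * s k =
      ((∑ j, Q j i) / Q i i) * (s i - ∑ k, Q i k * s k) :=
  benefit_of_fixing_expressed_opinion_general n A L hL U i M M' hM hM' Q Q' hQ hQ' s
end

section
/- Optimality of the first greedy step of Algorithm 1 (Theorem 2, single-step regime): let n ≥ 1, g s : Fin n → ℝ with |s i| ≤ 1 for all i, let i₀ : Fin n attain the maximum of |g i| over i, suppose g i₀ ≠ 0, set σ = Real.sign (g i₀), and let 0 ≤ μ ≤ 1 - σ · s i₀. Then μ · |g i₀| is the greatest element of the set { y : ℝ | ∃ Δs : Fin n → ℝ, (∑ i, |Δs i|) ≤ μ ∧ (∀ i, -1 ≤ s i + Δs i ∧ s i + Δs i ≤ 1) ∧ y = ∑ i, g i · Δs i }, and it is attained by the modification Δs = μ·σ·e_{i₀} (i.e., Δs i₀ = μ·σ and Δs i = 0 otherwise). -/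
/-- Optimality of the first greedy step of Algorithm 1 (Theorem 2, single-step
regime): if `i₀` attains `max_i |g i|`, `g i₀ ≠ 0`, `σ = sign (g i₀)`, and the
budget satisfies `0 ≤ μ ≤ 1 - σ * s i₀`, then `μ * |g i₀|` is the greatest
benefit achievable under the ℓ¹-budget and box constraints, and it is attained
by the modification `Δs = μ·σ·e_{i₀}`. -/
theorem siop_first_step_optimal
    (n : ℕ) (hn : 0 < n) (g s : Fin n → ℝ)
    (hs : ∀ i, |s i| ≤ 1)
    (i₀ : Fin n) (hmax : ∀ i, |g i| ≤ |g i₀|) (hg : g i₀ ≠ 0)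
    (σ : ℝ) (hσ : σ = Real.sign (g i₀))
    (μ : ℝ) (hμ0 : 0 ≤ μ) (hμ1 : μ ≤ 1 - σ * s i₀) :
    IsGreatest {y : ℝ | ∃ Δs : Fin n → ℝ, (∑ i, |Δs i|) ≤ μ ∧
        (∀ i, -1 ≤ s i + Δs i ∧ s i + Δs i ≤ 1) ∧ y = ∑ i, g i * Δs i}
      (μ * |g i₀|) ∧
    ((∑ i, |if i = i₀ then μ * σ else 0|) ≤ μ ∧
      (∀ i, -1 ≤ s i + (if i = i₀ then μ * σ else 0) ∧
        s i + (if i = i₀ then μ * σ else 0) ≤ 1) ∧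
      (∑ i, g i * (if i = i₀ then μ * σ else 0)) = μ * |g i₀|) := by
  have hσcases : (σ = 1 ∧ 0 < g i₀) ∨ (σ = -1 ∧ g i₀ < 0) := by
    rcases lt_trichotomy (g i₀) 0 with h | h | h
    · right; exact ⟨by rw [hσ, Real.sign_of_neg h], h⟩
    · exact absurd h hg
    · left; exact ⟨by rw [hσ, Real.sign_of_pos h], h⟩
  have hσg : σ * g i₀ = |g i₀| := by
    rcases hσcases with ⟨h1, h2⟩ | ⟨h1, h2⟩
    · rw [h1, one_mul, abs_of_pos h2]
    · rw [h1, abs_of_neg h2]; ring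
  have hσabs : |σ| = 1 := by
    rcases hσcases with ⟨h1, _⟩ | ⟨h1, _⟩ <;> simp [h1]
  -- properties of the specific Δs
  have hsum : (∑ i, |if i = i₀ then μ * σ else 0|) ≤ μ := by
    rw [Finset.sum_eq_single i₀ (by intro i _ h; simp [h]) (by simp)]
    simp [abs_mul, hσabs, abs_of_nonneg hμ0]
  have hbox : ∀ i, -1 ≤ s i + (if i = i₀ then μ * σ else 0) ∧
      s i + (if i = i₀ then μ * σ else 0) ≤ 1 := by
    intro i
    by_cases h : i = i₀
    · subst h
      have h1 := abs_le.mp (hs i)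
      rw [if_pos rfl]
      rcases hσcases with ⟨hσ1, _⟩ | ⟨hσ1, _⟩ <;> subst hσ1 <;>
        constructor <;> nlinarith [hμ1, h1.1, h1.2]
    · simp only [if_neg h, add_zero]
      exact abs_le.mp (hs i)
  have hval : (∑ i, g i * (if i = i₀ then μ * σ else 0)) = μ * |g i₀| := by
    rw [Finset.sum_eq_single i₀ (by intro i _ h; simp [h]) (by simp)]
    rw [if_pos rfl, ← hσg]; ring
  refine ⟨⟨⟨fun i => if i = i₀ then μ * σ else 0, hsum, hbox, hval.symm⟩, ?_⟩,
    hsum, hbox, hval⟩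
  rintro y ⟨Δs, hΔsum, hΔbox, rfl⟩
  calc (∑ i, g i * Δs i) ≤ ∑ i, |g i₀| * |Δs i| := by
        apply Finset.sum_le_sum
        intro i _
        calc g i * Δs i ≤ |g i * Δs i| := le_abs_self _
          _ = |g i| * |Δs i| := abs_mul _ _
          _ ≤ |g i₀| * |Δs i| := by
              exact mul_le_mul_of_nonneg_right (hmax i) (abs_nonneg _)
    _ = |g i₀| * ∑ i, |Δs i| := by rw [Finset.mul_sum]
    _ ≤ |g i₀| * μ := mul_le_mul_of_nonneg_left hΔsum (abs_nonneg _)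
    _ = μ * |g i₀| := mul_comm _ _
end
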